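/- The second primary Cartan invariant V₀ of the model M_LC vanishes identically: on Ω = {z₂ζ₂ ≠ 1}, the function V₀ := −(1/3)·ℒ̄₁(ℒ̄₁(ℒ̄₁(k)))/ℒ̄₁(k) + (5/9)·(ℒ̄₁(ℒ̄₁(k))/ℒ̄₁(k))² − (1/9)·(ℒ̄₁(ℒ̄₁(k))/ℒ̄₁(k))·P̄ + (1/3)·ℒ̄₁(P̄) − (1/9)·P̄² is identically zero. -/

import Mathlib

open Complex

noncomputable section

/-- Partial derivative with respect to `z₁`, the first coordinate of `(z₁, z₂, ζ₁, ζ₂) ∈ ℂ⁴`. -/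
def pz1 (G : ℂ × ℂ × ℂ × ℂ → ℂ) (q : ℂ × ℂ × ℂ × ℂ) : ℂ :=
  deriv (fun s => G (s, q.2.1, q.2.2.1, q.2.2.2)) q.1

/-- Partial derivative with respect to `ζ₁`. -/
def pc1 (G : ℂ × ℂ × ℂ × ℂ → ℂ) (q : ℂ × ℂ × ℂ × ℂ) : ℂ :=
  deriv (fun s => G (q.1, q.2.1, s, q.2.2.2)) q.2.2.1

/-- The polarized graphing function of the model `M_LC`:
`F(z₁, z₂, ζ₁, ζ₂) = (z₁ζ₁ + ½z₁²ζ₂ + ½ζ₁²z₂)/(1 − z₂ζ₂)`. -/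
def Fmod : ℂ × ℂ × ℂ × ℂ → ℂ := fun q =>
  (q.1 * q.2.2.1 + (1 / 2) * q.1 ^ 2 * q.2.2.2 + (1 / 2) * q.2.2.1 ^ 2 * q.2.1)
    / (1 - q.2.1 * q.2.2.2)

/-- The slant function of the model: `k = −(ζ₁ + z₁ζ₂)/(1 − z₂ζ₂)`. -/
def kmod : ℂ × ℂ × ℂ × ℂ → ℂ := fun q =>
  -((q.2.2.1 + q.1 * q.2.2.2) / (1 - q.2.1 * q.2.2.2))

/-- The function `P̄ = F_{ζ₁ζ₁z₁}/F_{z₁ζ₁}` of the model. -/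
def Pbarmod : ℂ × ℂ × ℂ × ℂ → ℂ := fun q =>
  pz1 (pc1 (pc1 Fmod)) q / pc1 (pz1 Fmod) q

/-- The second primary Cartan invariant `V₀` of the model `M_LC`, with `ℒ̄₁ = ∂_{ζ₁}`. -/
def V0mod : ℂ × ℂ × ℂ × ℂ → ℂ := fun q =>
  -(1 / 3) * pc1 (pc1 (pc1 kmod)) q / pc1 kmod q
    + (5 / 9) * (pc1 (pc1 kmod) q / pc1 kmod q) ^ 2
    - (1 / 9) * (pc1 (pc1 kmod) q / pc1 kmod q) * Pbarmod q
    + (1 / 3) * pc1 Pbarmod q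
    - (1 / 9) * Pbarmod q ^ 2

/-!
`F_{ζ₁ζ₁} = z₂/(1 − z₂ζ₂)` does not involve `z₁`, so `P̄ ≡ 0`, and `k` is affine in `ζ₁`, so
`ℒ̄₁²k ≡ 0`. Every term of `V₀` contains one of `ℒ̄₁³k`, `ℒ̄₁²k`, `P̄`, `ℒ̄₁P̄` as a factor.
-/

lemma pc1_eq_zero_of_forall_eq {G : ℂ × ℂ × ℂ × ℂ → ℂ}
    (hG : ∀ q s, G (q.1, q.2.1, s, q.2.2.2) = G q) : pc1 G = 0 := by
  funext q
  simp only [pc1, hG, deriv_const, Pi.zero_apply]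

lemma pz1_eq_zero_of_forall_eq {G : ℂ × ℂ × ℂ × ℂ → ℂ}
    (hG : ∀ q s, G (s, q.2.1, q.2.2.1, q.2.2.2) = G q) : pz1 G = 0 := by
  funext q
  simp only [pz1, hG, deriv_const, Pi.zero_apply]

@[simp]
lemma pc1_zero : pc1 0 = 0 :=
  pc1_eq_zero_of_forall_eq fun _ _ => rfl

lemma pc1_Fmod (q : ℂ × ℂ × ℂ × ℂ) :
    pc1 Fmod q = (q.1 + q.2.2.1 * q.2.1) / (1 - q.2.1 * q.2.2.2) := by
  simp (disch := fun_prop) [pc1, Fmod, deriv_fun_add]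
  ring

lemma pc1_pc1_Fmod (q : ℂ × ℂ × ℂ × ℂ) :
    pc1 (pc1 Fmod) q = q.2.1 / (1 - q.2.1 * q.2.2.2) := by
  rw [pc1]
  simp (disch := fun_prop) [pc1_Fmod]

lemma Pbarmod_eq_zero : Pbarmod = 0 := by
  have hF : pz1 (pc1 (pc1 Fmod)) = 0 :=
    pz1_eq_zero_of_forall_eq fun q s => by simp only [pc1_pc1_Fmod]
  funext q
  simp [Pbarmod, hF]

lemma pc1_kmod (q : ℂ × ℂ × ℂ × ℂ) : pc1 kmod q = -(1 / (1 - q.2.1 * q.2.2.2)) := by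
  simp [pc1, kmod]

lemma pc1_pc1_kmod : pc1 (pc1 kmod) = 0 :=
  pc1_eq_zero_of_forall_eq fun q s => by simp only [pc1_kmod]

theorem V0_model_vanishes_general (q : ℂ × ℂ × ℂ × ℂ) :
    V0mod q = 0 := by
  simp [V0mod, Pbarmod_eq_zero, pc1_pc1_kmod]

/-- The second primary Cartan invariant `V₀` of the model `M_LC` vanishes identically
on `Ω = {z₂ζ₂ ≠ 1}`. -/
theorem V0_model_vanishes (q : ℂ × ℂ × ℂ × ℂ) (hq : q.2.1 * q.2.2.2 ≠ 1) :
    V0mod q = 0 :=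
  V0_model_vanishes_general q
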